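/- arXiv:1111.5167 — 8 statements merged into one kernel-verified Lean document; each statement's English description precedes it below -/
import Mathlib

section
/- Let κ ∈ ℂ and M ∈ ℂ^{n×n}, and let M_κ be the ℝ-linear operator on ℂ^n given by M_κ z = κ z + M z̄. If λ belongs to the spectrum of M_κ, then every μ ∈ ℂ with |μ − κ| = |λ − κ| also belongs to the spectrum of M_κ. In other words, the spectrum of M_κ is a union of circles centred at κ. -/
/-! An eigenvector `z` for `l` satisfies `M z̄ = (l - κ) z`. Replacing `z` by `c z` multiplies the
eigenvalue `l - κ` of `z ↦ M z̄` by `conj c / c`, which ranges over the whole unit circle, so `l - κ`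
can be rotated onto any `μ - κ` of the same modulus. -/

open ComplexConjugate Matrix

theorem Complex.exists_ne_zero_conj_mul_eq_mul_of_norm_eq {a b : ℂ} (h : ‖a‖ = ‖b‖) :
    ∃ c ≠ 0, conj c * a = c * b := by
  rcases eq_or_ne a 0 with rfl | ha
  · refine ⟨1, one_ne_zero, ?_⟩
    rw [norm_zero, eq_comm, norm_eq_zero] at h
    simp [h]
  have hb : b ≠ 0 := norm_ne_zero_iff.1 (h ▸ norm_ne_zero_iff.2 ha)
  -- `c ^ 2 = a * conj b` gives `c * (conj c * a) = ‖c‖ ^ 2 * a = ‖b‖ ^ 2 * a = c * (c * b)`.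
  obtain ⟨c, hc⟩ := IsAlgClosed.exists_pow_nat_eq (a * conj b) two_pos
  have hc0 : c ≠ 0 := ne_zero_pow two_ne_zero (hc ▸ mul_ne_zero ha ((map_ne_zero _).2 hb))
  have hnorm : ‖c‖ = ‖b‖ := by
    refine (sq_eq_sq₀ (norm_nonneg _) (norm_nonneg _)).1 ?_
    rw [← norm_pow, hc, norm_mul, Complex.norm_conj, h, sq]
  refine ⟨c, hc0, mul_left_cancel₀ hc0 ?_⟩
  calc c * (conj c * a) = (‖b‖ : ℂ) ^ 2 * a := by rw [← mul_assoc, Complex.mul_conj', hnorm]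
    _ = a * conj b * b := by rw [mul_assoc, Complex.conj_mul']; ring
    _ = c * (c * b) := by rw [← hc]; ring

theorem Matrix.mulVec_star_smul_eq_of_conj_mul_eq {m : Type*} [Fintype m]
    {M : Matrix m m ℂ} {z : m → ℂ} {a b c : ℂ} (hz : M *ᵥ star z = a • z)
    (hc : conj c * a = c * b) : M *ᵥ star (c • z) = b • c • z := by
  rw [star_smul, mulVec_smul, hz, smul_smul, smul_smul, Complex.star_def, hc, mul_comm]

/-- The spectrum of the antilinear/ℝ-linear operator `z ↦ κ z + M z̄` consists of
circles centred at `κ`: if `l` is an eigenvalue, so is any `μ` with `|μ - κ| = |l - κ|`. -/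
theorem spectrum_union_of_circles {n : ℕ} (κ : ℂ) (M : Matrix (Fin n) (Fin n) ℂ)
    (l μ : ℂ)
    (hl : ∃ z : Fin n → ℂ, z ≠ 0 ∧ κ • z + M.mulVec (star z) = l • z)
    (hμ : ‖μ - κ‖ = ‖l - κ‖) :
    ∃ z : Fin n → ℂ, z ≠ 0 ∧ κ • z + M.mulVec (star z) = μ • z := by
  obtain ⟨z, hz0, hz⟩ := hl
  have hMz : M *ᵥ star z = (l - κ) • z := by rw [sub_smul, ← hz, add_sub_cancel_left]
  obtain ⟨c, hc0, hc⟩ := Complex.exists_ne_zero_conj_mul_eq_mul_of_norm_eq hμ.symm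
  refine ⟨c • z, smul_ne_zero hc0 hz0, ?_⟩
  rw [Matrix.mulVec_star_smul_eq_of_conj_mul_eq hMz hc, ← add_smul, add_sub_cancel]
end

section
/- Let κ ∈ ℂ, M ∈ ℂ^{n×n}, b ∈ ℂ^n, and let X ∈ ℂ^{n×n} be invertible. Then X^{-1}·K_j(M_κ; b) = K_j(N_κ; c), where N = X^{-1} M X̄ (X̄ denoting the entrywise conjugate of X), c = X^{-1} b, and N_κ z = κ z + N z̄. -/
/-- The antilinear map `z ↦ M z̄`. -/
noncomputable def antiMul {n : ℕ} (M : Matrix (Fin n) (Fin n) ℂ) (z : Fin n → ℂ) : Fin n → ℂ :=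
  M.mulVec (star z)

/-- The Krylov subspace `K_j(M_κ; b) = span{b, M_0 b, …, M_0^{j-1} b}` (independent of `κ`),
where `M_0 z = M z̄`. -/
noncomputable def krylov {n : ℕ} (M : Matrix (Fin n) (Fin n) ℂ) (b : Fin n → ℂ) (j : ℕ) :
    Submodule ℂ (Fin n → ℂ) :=
  Submodule.span ℂ ((fun k => (antiMul M)^[k] b) '' Set.Iio j)

lemma star_mulVec' {n : ℕ} (A : Matrix (Fin n) (Fin n) ℂ) (v : Fin n → ℂ) :
    star (A.mulVec v) = (A.map (starRingEnd ℂ)).mulVec (star v) := by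
  funext i
  simp [Matrix.mulVec, dotProduct, Matrix.map_apply, Pi.star_apply, star_sum]

lemma key {n : ℕ} (M X : Matrix (Fin n) (Fin n) ℂ) (hX : IsUnit X) (z : Fin n → ℂ) :
    X⁻¹.mulVec (antiMul M z) =
      antiMul (X⁻¹ * M * X.map (starRingEnd ℂ)) (X⁻¹.mulVec z) := by
  have hdet : IsUnit X.det := (Matrix.isUnit_iff_isUnit_det X).mp hX
  have h1 : X.map (starRingEnd ℂ) * X⁻¹.map (starRingEnd ℂ) = 1 := by
    rw [← Matrix.map_mul, Matrix.mul_nonsing_inv _ hdet]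
    simp
  unfold antiMul
  rw [star_mulVec', Matrix.mulVec_mulVec, Matrix.mulVec_mulVec,
    mul_assoc (X⁻¹ * M), h1, mul_one]

lemma key_iter {n : ℕ} (M X : Matrix (Fin n) (Fin n) ℂ) (hX : IsUnit X) (b : Fin n → ℂ)
    (k : ℕ) :
    X⁻¹.mulVec ((antiMul M)^[k] b) =
      (antiMul (X⁻¹ * M * X.map (starRingEnd ℂ)))^[k] (X⁻¹.mulVec b) := by
  induction k with
  | zero => simp
  | succ k ih =>
    rw [Function.iterate_succ_apply', Function.iterate_succ_apply', key M X hX, ih]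

/-- `X⁻¹ ⋅ K_j(M_κ; b) = K_j(N_κ; c)` with `N = X⁻¹ M X̄` and `c = X⁻¹ b`. -/
theorem krylov_consimilarity {n : ℕ} (j : ℕ) (M X : Matrix (Fin n) (Fin n) ℂ)
    (b : Fin n → ℂ) (hX : IsUnit X) :
    Submodule.map (Matrix.mulVecLin X⁻¹) (krylov M b j) =
      krylov (X⁻¹ * M * X.map (starRingEnd ℂ)) (X⁻¹.mulVec b) j := by
  unfold krylov
  rw [Submodule.map_span, Set.image_image]
  congr 1
  ext v
  constructor <;> rintro ⟨k, hk, rfl⟩ <;> exact ⟨k, hk, by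
    simp [Matrix.mulVecLin_apply, key_iter M X hX]⟩
end

section
/- Suppose M ∈ ℂ^{n×n} is condiagonalizable, M = X Λ (X̄)^{-1} with X invertible and Λ diagonal, let κ ∈ ℂ and b ∈ ℂ^n, and let D be a unitary diagonal matrix such that D^{-1} X^{-1} b ∈ ℝ^n. Set Â = D^{-1} Λ D̄ (a diagonal matrix) and let σ(Â) denote the set of its diagonal entries. Then for every j ≥ 1, min over z ∈ K_j(M_κ; b) of ‖M_κ z − b‖ ≤ κ₂(X) · ( min over p ∈ P_{j−1}(r2) of max over λ ∈ σ(Â) of |κ p(λ) + λ · conj(p(λ)) − 1| ) · ‖b‖, where κ₂(X) = ‖X‖·‖X^{-1}‖ is the condition number in the spectral (operator 2-) norm. -/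
/-- The Euclidean norm on `ℂⁿ`. -/
noncomputable def enorm2 {n : ℕ} (v : Fin n → ℂ) : ℝ :=
  Real.sqrt (∑ i, ‖v i‖ ^ 2)

/-- The spectral (operator 2-) norm of a matrix. -/
noncomputable def opNorm2 {n : ℕ} (A : Matrix (Fin n) (Fin n) ℂ) : ℝ :=
  ‖Matrix.toEuclideanCLM (𝕜 := ℂ) (n := Fin n) A‖

/-- Evaluation of the polyanalytic polynomial in `P_j(r2)` with coefficients `α`
(supported in `{0,…,j}`):  `p(λ) = ∑_{k=0}^{⌊j/2⌋} (α_{2k} + α_{2k+1} λ)|λ|^{2k}`. -/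
noncomputable def evalR2 (j : ℕ) (α : ℕ → ℂ) (z : ℂ) : ℂ :=
  ∑ k ∈ Finset.range (j / 2 + 1), (α (2 * k) + α (2 * k + 1) * z) * ((‖z‖ : ℝ) : ℂ) ^ (2 * k)

/-!
Put `Y = X D`. Then `M Ȳ = Y Â` with `Â` diagonal and `b = Y d` with `d = D⁻¹X⁻¹b` real, so the
antilinear map `M₀ z = M z̄` acts in the coordinates `z = Y v` as `v ↦ Â v̄`, entrywise
`vᵢ ↦ λᵢ v̄ᵢ`. Because `d` is real, iterating from `d` produces `φₖ(λᵢ) dᵢ`, where `φₖ` runs through the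
monomials `1, λ, |λ|², λ|λ|², …` spanning `P_{j-1}(r2)`. Hence for `p ∈ P_{j-1}(r2)` the vector
`z = Y (p(λᵢ) dᵢ)ᵢ` lies in the Krylov space, and its residual is `Y ((κ p(λᵢ) + λᵢ p̄(λᵢ) - 1) dᵢ)ᵢ`.
Since `D` is unitary, its norm is at most `‖X‖ · maxᵢ |κ p(λᵢ) + λᵢ p̄(λᵢ) - 1| · ‖X⁻¹‖ ‖b‖`.
-/

open Matrix ComplexConjugate

theorem Finset.sum_range_two_mul {β : Type*} [AddCommMonoid β] (N : ℕ) (f : ℕ → β) :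
    ∑ k ∈ Finset.range (2 * N), f k = ∑ k ∈ Finset.range N, (f (2 * k) + f (2 * k + 1)) := by
  induction N with
  | zero => simp
  | succ N ih =>
    rw [Nat.mul_succ, Finset.sum_range_succ, Finset.sum_range_succ, ih, Finset.sum_range_succ,
      add_assoc]

theorem csInf_le_mul_csInf {S T : Set ℝ} {c : ℝ} (hS : BddBelow S) (hT : T.Nonempty)
    (hc : 0 ≤ c) (h : ∀ t ∈ T, ∃ s ∈ S, s ≤ c * t) : sInf S ≤ c * sInf T := by
  rw [← smul_eq_mul, ← Real.sInf_smul_of_nonneg hc]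
  refine le_csInf (hT.smul_set) ?_
  rintro _ ⟨t, ht, rfl⟩
  obtain ⟨s, hs, hst⟩ := h t ht
  exact csInf_le_of_le hS hs hst

theorem Matrix.IsDiag.mul {ι α : Type*} [Fintype ι] [NonUnitalNonAssocSemiring α]
    {A B : Matrix ι ι α} (hA : A.IsDiag) (hB : B.IsDiag) : (A * B).IsDiag := by
  classical
  rw [← hA.diagonal_diag, ← hB.diagonal_diag, diagonal_mul_diagonal]
  exact isDiag_diagonal _

theorem Matrix.star_mulVec_eq_map_mulVec {m l R : Type*} [Fintype l] [CommSemiring R] [StarRing R]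
    (A : Matrix m l R) (v : l → R) : star (A *ᵥ v) = A.map (starRingEnd R) *ᵥ star v :=
  funext fun i => RingHom.map_mulVec (starRingEnd R) A v i

section Norms

variable {n : ℕ}

theorem enorm2_eq_norm_toLp (v : Fin n → ℂ) : enorm2 v = ‖WithLp.toLp 2 v‖ := by
  rw [EuclideanSpace.norm_eq]
  rfl

theorem enorm2_nonneg (v : Fin n → ℂ) : 0 ≤ enorm2 v := Real.sqrt_nonneg _

theorem opNorm2_nonneg (A : Matrix (Fin n) (Fin n) ℂ) : 0 ≤ opNorm2 A := norm_nonneg _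

theorem enorm2_mulVec_le (A : Matrix (Fin n) (Fin n) ℂ) (v : Fin n → ℂ) :
    enorm2 (A *ᵥ v) ≤ opNorm2 A * enorm2 v := by
  rw [enorm2_eq_norm_toLp, enorm2_eq_norm_toLp]
  exact (toEuclideanCLM (𝕜 := ℂ) A).le_opNorm (WithLp.toLp 2 v)

theorem enorm2_mulVec_of_mem_unitaryGroup {U : Matrix (Fin n) (Fin n) ℂ}
    (hU : U ∈ unitaryGroup (Fin n) ℂ) (v : Fin n → ℂ) : enorm2 (U *ᵥ v) = enorm2 v := by
  set T := toEuclideanCLM (n := Fin n) (𝕜 := ℂ) U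
  have hT : ContinuousLinearMap.adjoint T ∘L T = 1 := by
    rw [← ContinuousLinearMap.star_eq_adjoint]
    change star T * T = 1
    rw [← map_star, ← map_mul, Unitary.star_mul_self_of_mem hU, map_one]
  rw [enorm2_eq_norm_toLp, enorm2_eq_norm_toLp]
  exact (ContinuousLinearMap.norm_map_iff_adjoint_comp_self T).2 hT (WithLp.toLp 2 v)

theorem enorm2_mul_le {r v : Fin n → ℂ} {S : ℝ} (hS : 0 ≤ S) (hr : ∀ i, ‖r i‖ ≤ S) :
    enorm2 (fun i => r i * v i) ≤ S * enorm2 v := by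
  rw [enorm2, enorm2, ← Real.sqrt_sq hS, ← Real.sqrt_mul (sq_nonneg S), Finset.mul_sum]
  gcongr with i
  rw [norm_mul, mul_pow]
  gcongr
  exact hr i

end Norms

/-- The monomials `1, λ, |λ|², λ|λ|², |λ|⁴, …` spanning the spaces `P_k(r2)`. -/
noncomputable def monomialR2 : ℕ → ℂ → ℂ
  | 0, _ => 1
  | k + 1, z => z * conj (monomialR2 k z)

theorem monomialR2_add_two (k : ℕ) (z : ℂ) :
    monomialR2 (k + 2) z = ((‖z‖ : ℝ) : ℂ) ^ 2 * monomialR2 k z := by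
  simp only [monomialR2, map_mul, Complex.conj_conj, ← Complex.mul_conj']
  ring

theorem monomialR2_two_mul (m : ℕ) (z : ℂ) :
    monomialR2 (2 * m) z = ((‖z‖ : ℝ) : ℂ) ^ (2 * m) := by
  induction m with
  | zero => rfl
  | succ m ih => rw [Nat.mul_succ, monomialR2_add_two, ih, ← pow_add, add_comm]

theorem monomialR2_two_mul_add_one (m : ℕ) (z : ℂ) :
    monomialR2 (2 * m + 1) z = z * ((‖z‖ : ℝ) : ℂ) ^ (2 * m) := by
  rw [monomialR2, monomialR2_two_mul, map_pow, Complex.conj_ofReal]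

theorem evalR2_eq_sum_monomialR2 (m : ℕ) (α : ℕ → ℂ) (z : ℂ) :
    evalR2 m α z = ∑ k ∈ Finset.range (2 * (m / 2 + 1)), α k * monomialR2 k z := by
  rw [Finset.sum_range_two_mul, evalR2]
  refine Finset.sum_congr rfl fun k _ => ?_
  rw [monomialR2_two_mul, monomialR2_two_mul_add_one]
  ring

theorem sum_smul_antiMul_iterate_mem_krylov {n : ℕ} (M : Matrix (Fin n) (Fin n) ℂ) (b : Fin n → ℂ)
    {m : ℕ} {α : ℕ → ℂ} (hα : ∀ k, m < k → α k = 0) (N : ℕ) :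
    ∑ k ∈ Finset.range N, α k • (antiMul M)^[k] b ∈ krylov M b (m + 1) := by
  refine Submodule.sum_mem _ fun k _ => ?_
  by_cases hk : k < m + 1
  · exact Submodule.smul_mem _ _ (Submodule.subset_span ⟨k, hk, rfl⟩)
  · rw [hα k (by omega), zero_smul]
    exact Submodule.zero_mem _

section Krylov

variable {n : ℕ} {M Y A : Matrix (Fin n) (Fin n) ℂ} {d : Fin n → ℂ}

theorem antiMul_mulVec (hA : A.IsDiag) (hY : M * Y.map conj = Y * A) (v : Fin n → ℂ) :
    antiMul M (Y *ᵥ v) = Y *ᵥ fun i => A i i * conj (v i) := by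
  rw [antiMul, star_mulVec_eq_map_mulVec, mulVec_mulVec, hY, ← mulVec_mulVec]
  congr 1
  funext i
  conv_lhs => rw [← hA.diagonal_diag, mulVec_diagonal]
  rfl

theorem antiMul_iterate_mulVec (hA : A.IsDiag) (hY : M * Y.map conj = Y * A)
    (hd : ∀ i, conj (d i) = d i) (k : ℕ) :
    (antiMul M)^[k] (Y *ᵥ d) = Y *ᵥ fun i => monomialR2 k (A i i) * d i := by
  induction k with
  | zero => simp [monomialR2]
  | succ k ih =>
    rw [Function.iterate_succ_apply', ih, antiMul_mulVec hA hY]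
    congr 1
    funext i
    rw [monomialR2, map_mul, hd]
    ring

theorem mulVec_evalR2_mem_krylov (hA : A.IsDiag) (hY : M * Y.map conj = Y * A)
    (hd : ∀ i, conj (d i) = d i) {m : ℕ} {α : ℕ → ℂ} (hα : ∀ k, m < k → α k = 0) :
    (Y *ᵥ fun i => evalR2 m α (A i i) * d i) ∈ krylov M (Y *ᵥ d) (m + 1) := by
  convert sum_smul_antiMul_iterate_mem_krylov M (Y *ᵥ d) hα (2 * (m / 2 + 1)) using 1
  simp_rw [antiMul_iterate_mulVec hA hY hd, ← mulVec_smul, ← mulVec_sum]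
  congr 1
  funext i
  simp [evalR2_eq_sum_monomialR2, Finset.sum_mul, mul_assoc]

theorem residual_mulVec (hA : A.IsDiag) (hY : M * Y.map conj = Y * A)
    (hd : ∀ i, conj (d i) = d i) (κ : ℂ) (p : Fin n → ℂ) :
    κ • (Y *ᵥ fun i => p i * d i) + M *ᵥ star (Y *ᵥ fun i => p i * d i) - Y *ᵥ d =
      Y *ᵥ fun i => (κ * p i + A i i * conj (p i) - 1) * d i := by
  rw [← antiMul, antiMul_mulVec hA hY, ← mulVec_smul, ← mulVec_add, ← mulVec_sub]
  congr 1
  funext i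
  simp only [Pi.add_apply, Pi.sub_apply, Pi.smul_apply, smul_eq_mul, map_mul, hd]
  ring

theorem exists_mem_krylov_enorm2_residual_le {X U : Matrix (Fin n) (Fin n) ℂ} (hA : A.IsDiag)
    (hY : M * (X * U).map conj = X * U * A) (hU : U ∈ unitaryGroup (Fin n) ℂ)
    (hd : ∀ i, conj (d i) = d i) (κ : ℂ) {m : ℕ} {α : ℕ → ℂ} (hα : ∀ k, m < k → α k = 0) :
    ∃ z ∈ krylov M ((X * U) *ᵥ d) (m + 1),
      enorm2 (κ • z + M *ᵥ star z - (X * U) *ᵥ d) ≤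
        opNorm2 X * (⨆ i, ‖κ * evalR2 m α (A i i) + A i i * conj (evalR2 m α (A i i)) - 1‖) *
          enorm2 d := by
  set r : Fin n → ℂ := fun i => κ * evalR2 m α (A i i) + A i i * conj (evalR2 m α (A i i)) - 1
  have hr : ∀ i, ‖r i‖ ≤ ⨆ i, ‖r i‖ := le_ciSup (Set.finite_range _).bddAbove
  refine ⟨_, mulVec_evalR2_mem_krylov hA hY hd hα, ?_⟩
  rw [residual_mulVec hA hY hd, ← mulVec_mulVec, mul_assoc]
  calc enorm2 (X *ᵥ U *ᵥ fun i => r i * d i)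
      ≤ opNorm2 X * enorm2 (U *ᵥ fun i => r i * d i) := enorm2_mulVec_le _ _
    _ = opNorm2 X * enorm2 (fun i => r i * d i) := by
      rw [enorm2_mulVec_of_mem_unitaryGroup hU]
    _ ≤ opNorm2 X * ((⨆ i, ‖r i‖) * enorm2 d) := by
      gcongr
      · exact opNorm2_nonneg X
      · exact enorm2_mul_le (Real.iSup_nonneg fun i => norm_nonneg _) hr

end Krylov

theorem mul_map_conj_mul_eq_of_condiag {n : ℕ} {M X Λ D : Matrix (Fin n) (Fin n) ℂ} (hX : IsUnit X)
    (hM : M = X * Λ * (X.map conj)⁻¹) (hD : IsUnit D) :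
    M * (X * D).map conj = X * D * (D⁻¹ * Λ * D.map conj) := by
  have hXc : IsUnit (X.map conj).det := by
    rw [← isUnit_iff_isUnit_det]
    exact hX.map (RingHom.mapMatrix (starRingEnd ℂ))
  rw [hM, Matrix.map_mul, ← Matrix.mul_assoc, Matrix.mul_assoc _ _ (X.map conj),
    nonsing_inv_mul _ hXc, Matrix.mul_one, Matrix.mul_assoc X D, ← Matrix.mul_assoc D,
    ← Matrix.mul_assoc D, mul_nonsing_inv _ ((isUnit_iff_isUnit_det D).1 hD), Matrix.one_mul,
    Matrix.mul_assoc X]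

theorem Matrix.inv_eq_star_of_mem_unitaryGroup {ι α : Type*} [Fintype ι] [DecidableEq ι]
    [CommRing α] [StarRing α] {U : Matrix ι ι α} (hU : U ∈ unitaryGroup ι α) : U⁻¹ = star U :=
  inv_eq_right_inv (Unitary.mul_star_self_of_mem hU)

theorem isDiag_inv_mul_mul_map_conj {n : ℕ} {Λ D : Matrix (Fin n) (Fin n) ℂ} (hΛ : Λ.IsDiag)
    (hD : D ∈ unitaryGroup (Fin n) ℂ) (hDdiag : D.IsDiag) : (D⁻¹ * Λ * D.map conj).IsDiag := by
  rw [inv_eq_star_of_mem_unitaryGroup hD, star_eq_conjTranspose]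
  exact (hDdiag.conjTranspose.mul hΛ).mul (hDdiag.map (map_zero _))

/-- The ℝ-linear GMRES convergence bound for a condiagonalizable `M = X Λ X̄⁻¹`:
with a unitary diagonal `D` making `D⁻¹X⁻¹b` real and `Â = D⁻¹ Λ D̄`,
`min_{z ∈ K_j} ‖κ z + M z̄ - b‖ ≤ κ₂(X) · min_{p ∈ P_{j-1}(r2)} max_{λ ∈ σ(Â)} |κ p(λ) + λ conj(p(λ)) - 1| · ‖b‖`. -/
theorem rlinear_gmres_bound {n : ℕ} (j : ℕ) (hj : 1 ≤ j) (κ : ℂ)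
    (M X Λ D : Matrix (Fin n) (Fin n) ℂ) (b : Fin n → ℂ)
    (hX : IsUnit X) (hΛ : Λ.IsDiag)
    (hM : M = X * Λ * (X.map (starRingEnd ℂ))⁻¹)
    (hD : D ∈ Matrix.unitaryGroup (Fin n) ℂ) (hDdiag : D.IsDiag)
    (hb : ∀ i, ((D⁻¹.mulVec (X⁻¹.mulVec b)) i).im = 0) :
    sInf {t : ℝ | ∃ z ∈ krylov M b j, t = enorm2 (κ • z + M.mulVec (star z) - b)} ≤
      (opNorm2 X * opNorm2 X⁻¹) *
        sInf {t : ℝ | ∃ α : ℕ → ℂ, (∀ k, j - 1 < k → α k = 0) ∧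
          t = ⨆ i : Fin n,
            ‖κ * evalR2 (j - 1) α ((D⁻¹ * Λ * D.map (starRingEnd ℂ)) i i) +
              ((D⁻¹ * Λ * D.map (starRingEnd ℂ)) i i) *
                (starRingEnd ℂ) (evalR2 (j - 1) α ((D⁻¹ * Λ * D.map (starRingEnd ℂ)) i i)) - 1‖} *
        enorm2 b := by
  obtain ⟨m, rfl⟩ : ∃ m, j = m + 1 := ⟨j - 1, by omega⟩
  rw [Nat.add_sub_cancel]
  have hDinv : D⁻¹ = star D := inv_eq_star_of_mem_unitaryGroup hD
  have hY := mul_map_conj_mul_eq_of_condiag hX hM (Unitary.isUnit_coe (U := ⟨D, hD⟩))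
  set d := D⁻¹ *ᵥ X⁻¹ *ᵥ b
  have hbd : (X * D) *ᵥ d = b := by
    rw [mulVec_mulVec, mulVec_mulVec, Matrix.mul_assoc X D, hDinv,
      Unitary.mul_star_self_of_mem hD, Matrix.mul_one,
      mul_nonsing_inv _ ((isUnit_iff_isUnit_det X).1 hX), one_mulVec]
  have hd : ∀ i, conj (d i) = d i := fun i => Complex.conj_eq_iff_im.2 (hb i)
  have hd_le : enorm2 d ≤ opNorm2 X⁻¹ * enorm2 b := by
    rw [enorm2_mulVec_of_mem_unitaryGroup (hDinv ▸ Unitary.star_mem hD)]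
    exact enorm2_mulVec_le _ _
  have hC : 0 ≤ opNorm2 X * opNorm2 X⁻¹ * enorm2 b :=
    mul_nonneg (mul_nonneg (opNorm2_nonneg X) (opNorm2_nonneg _)) (enorm2_nonneg b)
  rw [mul_right_comm]
  refine csInf_le_mul_csInf ⟨0, ?_⟩ ⟨_, 0, fun _ _ => rfl, rfl⟩ hC ?_
  · rintro _ ⟨z, -, rfl⟩
    exact enorm2_nonneg _
  rintro _ ⟨α, hα, rfl⟩
  obtain ⟨z, hz, hres⟩ := exists_mem_krylov_enorm2_residual_le
    (isDiag_inv_mul_mul_map_conj hΛ hD hDdiag) hY hD hd κ hα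
  rw [hbd] at hz hres
  refine ⟨_, ⟨z, hz, rfl⟩, hres.trans ?_⟩
  refine (mul_le_mul_of_nonneg_left hd_le ?_).trans_eq (by ring)
  exact mul_nonneg (opNorm2_nonneg X) (Real.iSup_nonneg fun i => norm_nonneg _)
end

section
/- Suppose M ∈ ℂ^{n×n} satisfies M = U R U^T, where U is unitary and R is upper triangular with diagonal entries r_{11}, …, r_{nn} whose absolute values |r_{11}|, …, |r_{nn}| are pairwise distinct. Then M is condiagonalizable. -/
/-!
For upper triangular `R`, the matrix `A = R R̄` is upper triangular with diagonal entries
`|r_ii|²`, which are pairwise distinct; so each eigenspace of `A` is the line spanned by an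
eigenvector `x_j`. Since these eigenvalues are real,
`A (R x̄_j) = R · conj (A x_j) = |r_jj|² R x̄_j`, hence `R x̄_j = λ_j x_j`, i.e. `R X̄ = X Λ` for
the invertible matrix `X` of eigenvectors.
Finally `Ū⁻¹ = Uᵀ` for unitary `U`, so `M = U R Uᵀ = (U X) Λ (conj (U X))⁻¹`.
-/

/-- A matrix `M` is condiagonalizable if `M = X Λ X̄⁻¹` with `X` invertible and `Λ` diagonal. -/
def IsCondiagonalizable {n : ℕ} (M : Matrix (Fin n) (Fin n) ℂ) : Prop :=
  ∃ X Λ : Matrix (Fin n) (Fin n) ℂ, IsUnit X ∧ Λ.IsDiag ∧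
    M = X * Λ * (X.map (starRingEnd ℂ))⁻¹

open Matrix ComplexConjugate

namespace Matrix.IsUpperTriangular

variable {ι R : Type*} [Fintype ι] [LinearOrder ι]

theorem mul_apply_self [NonUnitalNonAssocSemiring R] {A B : Matrix ι ι R}
    (hA : A.IsUpperTriangular) (hB : B.IsUpperTriangular) (i : ι) :
    (A * B) i i = A i i * B i i := by
  refine Finset.sum_eq_single i (fun k _ hki => ?_) (by simp)
  rcases hki.lt_or_gt with hlt | hgt
  · exact mul_eq_zero_of_left (hA hlt) _
  · exact mul_eq_zero_of_right _ (hB hgt)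

theorem mulVec_apply_of_forall_lt [NonUnitalNonAssocSemiring R] {A : Matrix ι ι R}
    (hA : A.IsUpperTriangular) {v : ι → R} {i : ι} (hv : ∀ k, i < k → v k = 0) :
    (A *ᵥ v) i = A i i * v i := by
  refine Finset.sum_eq_single i (fun k _ hki => ?_) (by simp)
  rcases hki.lt_or_gt with hlt | hgt
  · exact mul_eq_zero_of_left (hA hlt) _
  · rw [hv k hgt, mul_zero]

section CommRing

variable [CommRing R] [IsDomain R] {A : Matrix ι ι R}

theorem eq_zero_of_mulVec_eq_smul (hA : A.IsUpperTriangular) {j : ι} {μ : R}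
    (hμ : ∀ i ≠ j, A i i ≠ μ) {v : ι → R} (hv : A *ᵥ v = μ • v) (hvj : v j = 0) :
    v = 0 := by
  classical
  by_contra hne
  have hsupp : (Finset.univ.filter (v · ≠ 0)).Nonempty := by
    simpa [Finset.filter_nonempty_iff, funext_iff] using hne
  set i := (Finset.univ.filter (v · ≠ 0)).max' hsupp
  have hvi : v i ≠ 0 := (Finset.mem_filter.mp (Finset.max'_mem _ hsupp)).2
  have hvanish : ∀ k, i < k → v k = 0 := fun k hik => by
    by_contra hvk
    exact hik.not_ge (Finset.le_max' _ k (by simpa using hvk))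
  have hdiag : A i i = μ := by
    apply mul_right_cancel₀ hvi
    simpa [hA.mulVec_apply_of_forall_lt hvanish] using congrFun hv i
  obtain rfl : i = j := by_contra fun hij => hμ i hij hdiag
  exact hvi hvj

theorem exists_mulVec_eq_diag_smul (hA : A.IsUpperTriangular) (j : ι) :
    ∃ v ≠ 0, A *ᵥ v = A j j • v := by
  classical
  have hscalar : (A j j • 1 : Matrix ι ι R).IsUpperTriangular := by
    rw [smul_one_eq_diagonal]
    exact blockTriangular_diagonal _
  have hdet : (A - A j j • 1).det = 0 := by
    rw [det_of_isUpperTriangular (hA.sub hscalar)]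
    exact Finset.prod_eq_zero (Finset.mem_univ j) (by simp)
  obtain ⟨v, hv0, hv⟩ := exists_mulVec_eq_zero_iff.mpr hdet
  refine ⟨v, hv0, ?_⟩
  rwa [sub_mulVec, smul_mulVec, one_mulVec, sub_eq_zero] at hv

theorem eq_smul_of_mulVec_eq_smul (hA : A.IsUpperTriangular) (hdiag : Function.Injective A.diag)
    {j : ι} {x v : ι → R} (hx : A *ᵥ x = A j j • x) (hxj : x j = 1)
    (hv : A *ᵥ v = A j j • v) : v = v j • x := by
  have hμ : ∀ i ≠ j, A i i ≠ A j j := fun i hij h => hij (hdiag h)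
  refine sub_eq_zero.mp (hA.eq_zero_of_mulVec_eq_smul hμ ?_ (by simp [hxj]))
  rw [mulVec_sub, mulVec_smul, hx, hv, smul_sub, smul_comm]

end CommRing

theorem exists_normalized_eigenvectors [Field R] {A : Matrix ι ι R} (hA : A.IsUpperTriangular)
    (hdiag : Function.Injective A.diag) :
    ∃ x : ι → ι → R, (∀ j, x j j = 1) ∧ ∀ j, A *ᵥ x j = A j j • x j := by
  choose v hv0 hv using hA.exists_mulVec_eq_diag_smul
  have hvj : ∀ j, v j j ≠ 0 := fun j hvj =>
    hv0 j (hA.eq_zero_of_mulVec_eq_smul (fun i hij h => hij (hdiag h)) (hv j) hvj)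
  refine ⟨fun j => (v j j)⁻¹ • v j, fun j => by simp [hvj j], fun j => ?_⟩
  rw [mulVec_smul, hv j, smul_comm]

end Matrix.IsUpperTriangular

section Complex

variable {ι : Type*} [Fintype ι]

theorem Matrix.mul_map_conj_mulVec_mulVec_conj_eq_smul (R : Matrix ι ι ℂ) {x : ι → ℂ}
    {μ : ℂ} (hμ : conj μ = μ) (hx : (R * R.map conj) *ᵥ x = μ • x) :
    (R * R.map conj) *ᵥ (R *ᵥ (conj ∘ x)) = μ • (R *ᵥ (conj ∘ x)) := by
  have hconj : (R.map conj * R) *ᵥ (conj ∘ x) = μ • (conj ∘ x) := by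
    ext i
    have := RingHom.map_mulVec conj (R * R.map conj) x i
    rw [hx] at this
    simpa [hμ, Matrix.map_mul, Matrix.map_map, Function.comp_def] using this.symm
  rw [mulVec_mulVec, Matrix.mul_assoc, ← mulVec_mulVec, hconj, mulVec_smul]

theorem Matrix.inv_map_conj_of_mem_unitaryGroup [DecidableEq ι] {U : Matrix ι ι ℂ}
    (hU : U ∈ unitaryGroup ι ℂ) : (U.map conj)⁻¹ = Uᵀ := by
  refine inv_eq_left_inv ?_
  change Uᵀ * U.map star = 1
  rw [← conjTranspose_transpose, ← transpose_mul, ← star_eq_conjTranspose,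
    mem_unitaryGroup_iff'.mp hU, transpose_one]

end Complex

theorem isCondiagonalizable_of_mul_map_conj_eq {n : ℕ} {M X Λ : Matrix (Fin n) (Fin n) ℂ}
    (hX : IsUnit X) (hΛ : Λ.IsDiag) (h : M * X.map conj = X * Λ) : IsCondiagonalizable M := by
  have hXconj : IsUnit (X.map conj).det := by
    rw [← RingHom.mapMatrix_apply, ← RingHom.map_det]
    exact ((isUnit_iff_isUnit_det X).mp hX).map conj
  refine ⟨X, Λ, hX, hΛ, ?_⟩
  rw [← h, Matrix.mul_assoc, mul_nonsing_inv _ hXconj, Matrix.mul_one]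

theorem IsCondiagonalizable.mul_mul_inv_map_conj {n : ℕ} {M S : Matrix (Fin n) (Fin n) ℂ}
    (hM : IsCondiagonalizable M) (hS : IsUnit S) :
    IsCondiagonalizable (S * M * (S.map conj)⁻¹) := by
  obtain ⟨X, Λ, hX, hΛ, rfl⟩ := hM
  refine ⟨S * X, Λ, hS.mul hX, hΛ, ?_⟩
  rw [Matrix.map_mul, Matrix.mul_inv_rev]
  simp only [Matrix.mul_assoc]

theorem isCondiagonalizable_of_isUpperTriangular {n : ℕ} {R : Matrix (Fin n) (Fin n) ℂ}
    (hR : R.IsUpperTriangular) (hdist : Function.Injective fun i => ‖R i i‖) :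
    IsCondiagonalizable R := by
  set A := R * R.map conj with hAdef
  have hA : A.IsUpperTriangular := hR.mul (hR.map _)
  have hAdiag : ∀ i, A i i = (‖R i i‖ : ℂ) ^ 2 := fun i => by
    rw [hAdef, hR.mul_apply_self (hR.map _), map_apply, Complex.mul_conj']
  have hAinj : Function.Injective A.diag := fun i j hij => by
    simp only [diag, hAdiag] at hij
    exact hdist ((pow_left_inj₀ (norm_nonneg _) (norm_nonneg _) two_ne_zero).mp
      (by exact_mod_cast hij))
  obtain ⟨x, hx1, hx⟩ := hA.exists_normalized_eigenvectors hAinj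
  set y := fun j => R *ᵥ (conj ∘ x j)
  have hy : ∀ j, y j = y j j • x j := fun j => by
    refine hA.eq_smul_of_mulVec_eq_smul hAinj (hx j) (hx1 j) ?_
    have hreal : conj (A j j) = A j j := by rw [hAdiag, map_pow, Complex.conj_ofReal]
    exact R.mul_map_conj_mulVec_mulVec_conj_eq_smul hreal (hx j)
  have hX : IsUnit (of x)ᵀ := by
    refine linearIndependent_cols_iff_isUnit.mp ?_
    refine Module.End.eigenvectors_linearIndependent' (mulVecLin A) A.diag hAinj x fun j => ?_
    exact ⟨Module.End.mem_eigenspace_iff.mpr (hx j), fun h => by simpa [h] using hx1 j⟩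
  refine isCondiagonalizable_of_mul_map_conj_eq hX (isDiag_diagonal fun j => y j j) ?_
  ext i j
  rw [mul_diagonal]
  exact (congrFun (hy j) i).trans (mul_comm _ _)

/-- If `M = U R Uᵀ` with `U` unitary and `R` upper triangular whose diagonal entries have
pairwise distinct absolute values, then `M` is condiagonalizable. -/
theorem condiagonalizable_of_contriangular_distinct {n : ℕ}
    (M U R : Matrix (Fin n) (Fin n) ℂ)
    (hU : U ∈ Matrix.unitaryGroup (Fin n) ℂ)
    (hR : ∀ i j, j < i → R i j = 0)
    (hdist : Function.Injective fun i => ‖R i i‖)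
    (hM : M = U * R * U.transpose) :
    IsCondiagonalizable M := by
  have hUnit : IsUnit U := (isUnit_iff_isUnit_det U).mpr (UnitaryGroup.det_isUnit ⟨U, hU⟩)
  rw [hM, ← inv_map_conj_of_mem_unitaryGroup hU]
  exact (isCondiagonalizable_of_isUpperTriangular (fun i j => hR i j) hdist).mul_mul_inv_map_conj
    hUnit
end

section
/- Let R, S ∈ ℂ^{n×n} be upper triangular matrices such that |r_{ii}| = |s_{ii}| for all i, and such that |r_{ii}| ≠ |r_{jj}| whenever i ≠ j. If U ∈ ℂ^{n×n} is a unitary matrix satisfying R Ū = U S, where Ū is the entrywise conjugate of U, then U is a diagonal matrix. -/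
/-!
Comparing the `(i, j)` entry of `R Ū = U S` below the diagonal, once the entries of `U` below
row `i` in column `j` and left of column `j` in row `i` are known to vanish, leaves
`r_ii ū_ij = u_ij s_jj`; taking absolute values, `|r_ii| ≠ |r_jj| = |s_jj|` forces `u_ij = 0`.
So `U` is upper triangular, and a unitary upper triangular matrix is diagonal because its
inverse `U*` is upper triangular as well.
-/

namespace Matrix

variable {ι : Type*} [Fintype ι] [LinearOrder ι]

theorem IsUpperTriangular.of_mul_map_conj_eq_mul {𝕜 : Type*} [RCLike 𝕜] {R S U : Matrix ι ι 𝕜}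
    (hR : R.IsUpperTriangular) (hS : S.IsUpperTriangular)
    (hdiag : ∀ i j, j < i → ‖R i i‖ ≠ ‖S j j‖) (h : R * U.map (starRingEnd 𝕜) = U * S) :
    U.IsUpperTriangular := by
  intro i j hji
  -- columns from left to right, and within a column rows from bottom to top
  induction j using WellFoundedLT.induction generalizing i with | _ j ihj =>
  induction i using WellFoundedGT.induction with | _ i ihi =>
  have hentry : R i i * starRingEnd 𝕜 (U i j) = U i j * S j j := by
    have := congrFun (congrFun h i) j
    rwa [mul_apply, mul_apply, Finset.sum_eq_single i, Finset.sum_eq_single j] at this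
    · intro k _ hkj
      rcases hkj.lt_or_gt with hlt | hgt
      · rw [ihj k hlt (hlt.trans hji), zero_mul]
      · rw [hS hgt, mul_zero]
    · simp
    · intro k _ hki
      rcases hki.lt_or_gt with hlt | hgt
      · rw [hR hlt, zero_mul]
      · rw [map_apply, ihi k hgt (hji.trans hgt), map_zero, mul_zero]
    · simp
  by_contra hne
  have hnorm := congrArg norm hentry
  rw [norm_mul, norm_mul, RCLike.norm_conj, mul_comm] at hnorm
  exact hdiag i j hji (mul_left_cancel₀ (norm_ne_zero_iff.mpr hne) hnorm)

theorem IsUpperTriangular.isDiag_of_mem_unitaryGroup [DecidableEq ι] {α : Type*} [CommRing α]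
    [StarRing α] {U : Matrix ι ι α} (hU : U ∈ unitaryGroup ι α) (hup : U.IsUpperTriangular) :
    U.IsDiag := by
  let := invertibleOfLeftInverse U (star U) hU.1
  have hstar_up : (star U).IsUpperTriangular := by
    simpa only [inv_eq_left_inv hU.1] using blockTriangular_inv_of_blockTriangular hup
  intro i j hij
  rcases hij.lt_or_gt with hlt | hgt
  · simpa using hstar_up hlt
  · exact hup hgt

end Matrix

/-- If `R, S` are upper triangular with `|r_{ii}| = |s_{ii}|`, the `|r_{ii}|` pairwise
distinct, and `U` is unitary with `R Ū = U S`, then `U` is diagonal. -/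
theorem unitary_diag_of_contriangular_intertwine {n : ℕ}
    (R S U : Matrix (Fin n) (Fin n) ℂ)
    (hR : ∀ i j, j < i → R i j = 0)
    (hS : ∀ i j, j < i → S i j = 0)
    (habs : ∀ i, ‖R i i‖ = ‖S i i‖)
    (hdist : ∀ i j, i ≠ j → ‖R i i‖ ≠ ‖R j j‖)
    (hU : U ∈ Matrix.unitaryGroup (Fin n) ℂ)
    (heq : R * U.map (starRingEnd ℂ) = U * S) :
    U.IsDiag := by
  have hdiag : ∀ i j, j < i → ‖R i i‖ ≠ ‖S j j‖ := fun i j hji => habs j ▸ hdist i j hji.ne'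
  have hup : U.IsUpperTriangular :=
    .of_mul_map_conj_eq_mul (fun i j => hR i j) (fun i j => hS i j) hdiag heq
  exact hup.isDiag_of_mem_unitaryGroup hU
end

section
/- Let M ∈ ℂ^{n×n} and suppose M = U R U^T = V S V^T, where U, V are unitary and R, S are upper triangular matrices having the same diagonal, consisting of pairwise distinct real positive entries. Then there exists a diagonal matrix D ∈ ℝ^{n×n} with diagonal entries ±1 such that U = V D and R = D S D. -/
open Matrix

lemma tri_comm_aux {n : ℕ} (A B W : Matrix (Fin n) (Fin n) ℂ)
    (hA : ∀ i j, j < i → A i j = 0) (hB : ∀ i j, j < i → B i j = 0)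
    (hd : ∀ i, A i i = B i i)
    (hinj : ∀ i j : Fin n, A i i = A j j → i = j)
    (hWA : W * A = B * W) :
    ∀ i j : Fin n, j < i → W i j = 0 := by
  suffices key : ∀ m : ℕ, ∀ i j : Fin n, (j : ℕ) * n + (n - (i : ℕ)) = m → j < i → W i j = 0 by
    exact fun i j h => key _ i j rfl h
  intro m
  induction m using Nat.strong_induction_on with
  | _ m IH =>
    intro i j hm hji
    have hn : 0 < n := i.pos
    have heq : (W * A) i j = (B * W) i j := by rw [hWA]
    rw [Matrix.mul_apply, Matrix.mul_apply] at heq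
    have hL : ∑ k, W i k * A k j = W i j * A j j := by
      apply Finset.sum_eq_single
      · intro k _ hk
        rcases lt_or_gt_of_ne hk with h | h
        · have hW0 : W i k = 0 := by
            apply IH ((k : ℕ) * n + (n - (i : ℕ))) _ i k rfl (h.trans hji)
            have := (Nat.mul_lt_mul_right hn).mpr (Fin.lt_def.mp h)
            omega
          rw [hW0, zero_mul]
        · rw [hA k j h, mul_zero]
      · intro h; exact absurd (Finset.mem_univ j) h
    have hRs : ∑ k, B i k * W k j = B i i * W i j := by
      apply Finset.sum_eq_single
      · intro k _ hk
        rcases lt_or_gt_of_ne hk with h | h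
        · rw [hB i k h, zero_mul]
        · have hW0 : W k j = 0 := by
            apply IH ((j : ℕ) * n + (n - (k : ℕ))) _ k j rfl (hji.trans h)
            have h1 : (i : ℕ) < (k : ℕ) := Fin.lt_def.mp h
            have h2 : (k : ℕ) < n := k.isLt
            omega
          rw [hW0, mul_zero]
      · intro h; exact absurd (Finset.mem_univ i) h
    rw [hL, hRs, ← hd i] at heq
    have hne : A j j - A i i ≠ 0 := by
      intro h
      exact absurd (hinj j i (sub_eq_zero.mp h)) hji.ne
    have hz : W i j * (A j j - A i i) = 0 := by ring_nf; linear_combination heq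
    rcases mul_eq_zero.mp hz with h | h
    · exact h
    · exact absurd h hne

/-- Uniqueness of the unitary contriangularization: if `M = U R Uᵀ = V S Vᵀ` with `U, V`
unitary and `R, S` upper triangular with the same diagonal of pairwise distinct real
positive entries, then `U = V D` and `R = D S D` for a diagonal `D` with `±1` entries. -/
theorem contriangularization_uniqueness {n : ℕ}
    (M U V R S : Matrix (Fin n) (Fin n) ℂ)
    (hU : U ∈ Matrix.unitaryGroup (Fin n) ℂ)
    (hV : V ∈ Matrix.unitaryGroup (Fin n) ℂ)
    (hR : ∀ i j, j < i → R i j = 0)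
    (hS : ∀ i j, j < i → S i j = 0)
    (hdiag : ∀ i, R i i = S i i)
    (hpos : ∀ i, ∃ t : ℝ, 0 < t ∧ R i i = (t : ℂ))
    (hdist : Function.Injective fun i => R i i)
    (hM1 : M = U * R * U.transpose)
    (hM2 : M = V * S * V.transpose) :
    ∃ D : Matrix (Fin n) (Fin n) ℂ, D.IsDiag ∧ (∀ i, D i i = 1 ∨ D i i = -1) ∧
      U = V * D ∧ R = D * S * D := by
  set c := starRingEnd ℂ with hc
  set W : Matrix (Fin n) (Fin n) ℂ := star V * U with hWdef
  have hWmem : W ∈ Matrix.unitaryGroup (Fin n) ℂ := mul_mem (Unitary.star_mem hV) hU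
  have hW1 : star W * W = 1 := hWmem.1
  have hW2 : W * star W = 1 := hWmem.2
  have hV1 : star V * V = 1 := hV.1
  have hV2 : V * star V = 1 := hV.2
  have hVt : V.transpose * (star V).transpose = 1 := by
    rw [← Matrix.transpose_mul, hV1, Matrix.transpose_one]
  have hE : U * R * U.transpose = V * S * V.transpose := hM1 ▸ hM2
  have hWR : W * R * W.transpose = S := by
    calc W * R * W.transpose
        = star V * (U * R * U.transpose) * (star V).transpose := by
          rw [hWdef]; simp only [Matrix.transpose_mul, Matrix.mul_assoc]
      _ = star V * (V * S * V.transpose) * (star V).transpose := by rw [hE]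
      _ = (star V * V) * S * (V.transpose * (star V).transpose) := by
          simp only [Matrix.mul_assoc]
      _ = S := by rw [hV1, hVt, Matrix.one_mul, Matrix.mul_one]
  have hmap : ∀ X : Matrix (Fin n) (Fin n) ℂ, X.map c = (star X).transpose := by
    intro X; ext i j
    simp [Matrix.conjTranspose_apply, hc]
  have hmapT : ∀ X : Matrix (Fin n) (Fin n) ℂ, (X.transpose).map c = star X := by
    intro X; ext i j
    simp [Matrix.conjTranspose_apply, hc]
  set A : Matrix (Fin n) (Fin n) ℂ := R * R.map c with hAdef
  set B : Matrix (Fin n) (Fin n) ℂ := S * S.map c with hBdef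
  have hSmap : S.map c = W.map c * R.map c * star W := by
    rw [← hWR, Matrix.map_mul, Matrix.map_mul, hmapT]
  have hWtW : W.transpose * W.map c = 1 := by
    rw [hmap, ← Matrix.transpose_mul, hW1, Matrix.transpose_one]
  have hBWA : B = W * A * star W := by
    rw [hBdef, hAdef, hSmap, ← hWR]
    calc W * R * W.transpose * (W.map c * R.map c * star W)
        = W * (R * ((W.transpose * W.map c) * (R.map c * star W))) := by
          simp only [Matrix.mul_assoc]
      _ = W * (R * R.map c) * star W := by
          rw [hWtW, Matrix.one_mul]; simp only [Matrix.mul_assoc]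
  have hcomm : W * A = B * W := by
    rw [hBWA]
    calc W * A = W * A * (star W * W) := by rw [hW1, Matrix.mul_one]
      _ = W * A * star W * W := by simp only [Matrix.mul_assoc]
  choose t ht1 ht2 using hpos
  -- entrywise facts about A and B
  have hAtri : ∀ i j, j < i → A i j = 0 := by
    intro i j hji
    rw [hAdef, Matrix.mul_apply]
    apply Finset.sum_eq_zero
    intro k _
    rcases le_or_gt k j with h | h
    · rw [hR i k (lt_of_le_of_lt h hji), zero_mul]
    · rw [Matrix.map_apply, hR k j h, map_zero, mul_zero]
  have hBtri : ∀ i j, j < i → B i j = 0 := by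
    intro i j hji
    rw [hBdef, Matrix.mul_apply]
    apply Finset.sum_eq_zero
    intro k _
    rcases le_or_gt k j with h | h
    · rw [hS i k (lt_of_le_of_lt h hji), zero_mul]
    · rw [Matrix.map_apply, hS k j h, map_zero, mul_zero]
  have hAd : ∀ i, A i i = ((t i : ℂ)) ^ 2 := by
    intro i
    rw [hAdef, Matrix.mul_apply]
    rw [Finset.sum_eq_single i]
    · rw [Matrix.map_apply, ht2 i, hc]
      rw [Complex.conj_ofReal]; ring
    · intro k _ hk
      rcases lt_or_gt_of_ne hk with h | h
      · rw [hR i k h, zero_mul]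
      · rw [Matrix.map_apply, hR k i h, map_zero, mul_zero]
    · intro h; exact absurd (Finset.mem_univ i) h
  have hBd : ∀ i, B i i = ((t i : ℂ)) ^ 2 := by
    intro i
    rw [hBdef, Matrix.mul_apply]
    rw [Finset.sum_eq_single i]
    · rw [Matrix.map_apply, ← hdiag i, ht2 i, hc]
      rw [Complex.conj_ofReal]; ring
    · intro k _ hk
      rcases lt_or_gt_of_ne hk with h | h
      · rw [hS i k h, zero_mul]
      · rw [Matrix.map_apply, hS k i h, map_zero, mul_zero]
    · intro h; exact absurd (Finset.mem_univ i) h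
  have hABd : ∀ i, A i i = B i i := fun i => by rw [hAd i, hBd i]
  have hAinj : ∀ i j : Fin n, A i i = A j j → i = j := by
    intro i j h
    rw [hAd i, hAd j] at h
    have ht : t i = t j := by
      have h2 : ((t i ^ 2 : ℝ) : ℂ) = ((t j ^ 2 : ℝ) : ℂ) := by push_cast; exact h
      have h3 : (t i) ^ 2 = (t j) ^ 2 := Complex.ofReal_inj.mp h2
      nlinarith [ht1 i, ht1 j]
    apply hdist
    show R i i = R j j
    rw [ht2 i, ht2 j, ht]
  have hBinj : ∀ i j : Fin n, B i i = B j j → i = j := by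
    intro i j h
    exact hAinj i j (by rw [hABd i, hABd j]; exact h)
  -- W is lower-triangular-zero
  have hlow : ∀ i j : Fin n, j < i → W i j = 0 :=
    tri_comm_aux A B W hAtri hBtri hABd hAinj hcomm
  -- star W satisfies the symmetric relation
  have hXcomm : (star W) * B = A * (star W) := by
    calc (star W) * B = star W * B * (W * star W) := by rw [hW2, Matrix.mul_one]
      _ = star W * (B * W) * star W := by simp only [Matrix.mul_assoc]
      _ = star W * (W * A) * star W := by rw [hcomm]
      _ = (star W * W) * (A * star W) := by simp only [Matrix.mul_assoc]
      _ = A * star W := by rw [hW1, Matrix.one_mul]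
  have hup : ∀ i j : Fin n, j < i → W j i = 0 := by
    intro i j hji
    have h0 : (star W) i j = 0 :=
      tri_comm_aux B A (star W) hBtri hAtri (fun i => (hABd i).symm) hBinj hXcomm i j hji
    rw [Matrix.star_apply] at h0
    exact star_eq_zero.mp h0
  set d : Fin n → ℂ := fun i => W i i with hddef
  have hWd : W = Matrix.diagonal d := by
    ext i j
    rcases lt_trichotomy i j with h | h | h
    · rw [Matrix.diagonal_apply_ne _ h.ne, hup j i h]
    · subst h; rw [Matrix.diagonal_apply_eq]
    · rw [Matrix.diagonal_apply_ne _ h.ne', hlow i j h]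
  have hSd : S = Matrix.diagonal d * R * Matrix.diagonal d := by
    rw [← hWR, hWd, Matrix.diagonal_transpose]
  have hd2 : ∀ i, d i * d i = 1 := by
    intro i
    have h1 : S i i = d i * R i i * d i := by
      rw [hSd, Matrix.mul_diagonal, Matrix.diagonal_mul]
    rw [← hdiag i, ht2 i] at h1
    have htne : ((t i : ℂ)) ≠ 0 := by
      simpa using (ht1 i).ne'
    have h2 : (d i * d i - 1) * (t i : ℂ) = 0 := by linear_combination -h1
    rcases mul_eq_zero.mp h2 with h | h
    · linear_combination h
    · exact absurd h htne
  have hDD : Matrix.diagonal d * Matrix.diagonal d = 1 := by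
    rw [Matrix.diagonal_mul_diagonal]
    have hfun : (fun i => d i * d i) = fun _ => (1 : ℂ) := funext hd2
    rw [hfun, Matrix.diagonal_one]
  refine ⟨Matrix.diagonal d, Matrix.isDiag_diagonal d, ?_, ?_, ?_⟩
  · intro i
    rw [Matrix.diagonal_apply_eq]
    rcases mul_self_eq_one_iff.mp (hd2 i) with h | h
    · exact Or.inl h
    · exact Or.inr h
  · rw [← hWd, hWdef, ← Matrix.mul_assoc, hV2, Matrix.one_mul]
  · rw [hSd]
    have h3 : Matrix.diagonal d * (Matrix.diagonal d * R * Matrix.diagonal d) * Matrix.diagonal d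
        = (Matrix.diagonal d * Matrix.diagonal d) * R * (Matrix.diagonal d * Matrix.diagonal d) := by
      simp only [Matrix.mul_assoc]
    rw [h3, hDD, Matrix.one_mul, Matrix.mul_one]
end

section
/- Suppose U, V ∈ ℂ^{n×m} are isometric matrices (U*U = V*V = I_m) satisfying U U^T = V V^T. Then V = U R for some real orthogonal matrix R ∈ ℝ^{m×m} (i.e., R is real with R^T R = I_m). -/
/-- If `U, V ∈ ℂ^{n×m}` are isometric (`U*U = V*V = I`) and `U Uᵀ = V Vᵀ`, then
`V = U R` for a real orthogonal `R ∈ ℝ^{m×m}`. -/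
theorem isometry_conj_factor {n m : ℕ} (U V : Matrix (Fin n) (Fin m) ℂ)
    (hU : U.conjTranspose * U = 1) (hV : V.conjTranspose * V = 1)
    (h : U * U.transpose = V * V.transpose) :
    ∃ R : Matrix (Fin m) (Fin m) ℂ, (∀ i j, (R i j).im = 0) ∧
      R.transpose * R = 1 ∧ V = U * R := by
  set c := starRingEnd ℂ with hc
  set Vc := V.map c with hVcdef
  set R := U.transpose * Vc with hRdef
  have hVconjmap : V.conjTranspose.map c = V.transpose := by
    ext i j
    simp [Matrix.conjTranspose_apply, Matrix.map_apply, Matrix.transpose_apply, hc]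
  have hUconjmap : U.transpose.map c = U.conjTranspose := by
    ext i j
    simp [Matrix.conjTranspose_apply, Matrix.map_apply, Matrix.transpose_apply, hc]
  have hVcmap : Vc.map c = V := by
    ext i j; simp [Matrix.map_apply, hVcdef, hc]
  have hVtVc : V.transpose * Vc = 1 := by
    have h1 : (V.conjTranspose * V).map c = (1 : Matrix (Fin m) (Fin m) ℂ).map c := by
      rw [hV]
    rw [Matrix.map_mul, Matrix.map_one c (map_zero c) (map_one c), hVconjmap] at h1
    exact h1
  have hkey : V = U * R := by
    have h2 : U * U.transpose * Vc = V * V.transpose * Vc := by rw [h]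
    rw [Matrix.mul_assoc, Matrix.mul_assoc, hVtVc, Matrix.mul_one] at h2
    rw [hRdef]
    exact h2.symm
  refine ⟨R, ?_, ?_, hkey⟩
  · -- R is real
    have hR2 : U.conjTranspose * V = R := by
      rw [hkey, ← Matrix.mul_assoc, hU, Matrix.one_mul]
    have hconjR : R.map c = R := by
      rw [hRdef, Matrix.map_mul, hUconjmap, hVcmap, hR2, hRdef]
    intro i j
    have := congrFun (congrFun hconjR i) j
    simp only [Matrix.map_apply, hc] at this
    have := Complex.conj_eq_iff_im.mp this
    exact this
  · -- orthogonal
    rw [hRdef, Matrix.transpose_mul, Matrix.mul_assoc, ← Matrix.mul_assoc U.transpose.transpose,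
      Matrix.transpose_transpose, h, Matrix.mul_assoc, hVtVc, Matrix.mul_one]
    have : Vc.transpose * V = (V.transpose * Vc).transpose := by
      rw [Matrix.transpose_mul, Matrix.transpose_transpose]
    rw [this, hVtVc, Matrix.transpose_one]
end

section
/- Let r₁ > r₂ > … > r_k > 0 be distinct positive moduli, and for each l ∈ {1, …, k} let λ_{l,1} ≠ λ_{l,2} be two distinct points with |λ_{l,1}| = |λ_{l,2}| = r_l. Then for any prescribed values c_{l,i} ∈ ℂ (l = 1, …, k, i = 1, 2) there exists a polynomial p ∈ P_{2k−1}(r2) such that p(λ_{l,i}) = c_{l,i} for all l and i. -/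
open Polynomial

namespace Polynomial

theorem natDegree_lt_of_degree_lt {R : Type*} [Semiring R] {p : R[X]} {n : ℕ}
    (h : p.degree < n) (hn : 0 < n) : p.natDegree < n := by
  rcases eq_or_ne p 0 with rfl | hp
  · simpa using hn
  · exact (natDegree_lt_iff_degree_lt hp).2 h

def interleave {R : Type*} [Semiring R] (P Q : R[X]) (m : ℕ) : R :=
  if Even m then P.coeff (m / 2) else Q.coeff (m / 2)

section Interleave

variable {R : Type*} [Semiring R] (P Q : R[X])

@[simp]
theorem interleave_two_mul (m : ℕ) : interleave P Q (2 * m) = P.coeff m := by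
  simp [interleave]

@[simp]
theorem interleave_two_mul_add_one (m : ℕ) : interleave P Q (2 * m + 1) = Q.coeff m := by
  simp [interleave, Nat.add_div_of_dvd_right]

theorem interleave_eq_zero {P Q : R[X]} {n m : ℕ} (hP : P.degree < n) (hQ : Q.degree < n)
    (hm : 2 * n ≤ m) : interleave P Q m = 0 := by
  have hn : n ≤ m / 2 := by omega
  unfold interleave
  split_ifs
  · exact coeff_eq_zero_of_degree_lt (hP.trans_le (by exact_mod_cast hn))
  · exact coeff_eq_zero_of_degree_lt (hQ.trans_le (by exact_mod_cast hn))

end Interleave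

theorem exists_degree_lt_eval_eq {F : Type*} [Field F] {k : ℕ} {v : Fin k → F}
    (hv : Function.Injective v) (a : Fin k → F) :
    ∃ P : F[X], P.degree < k ∧ ∀ l, P.eval (v l) = a l := by
  have hvinj : Set.InjOn v (Finset.univ : Finset (Fin k)) := hv.injOn
  refine ⟨Lagrange.interpolate Finset.univ v a, ?_, fun l =>
    Lagrange.eval_interpolate_at_node a hvinj (Finset.mem_univ l)⟩
  simpa using Lagrange.degree_interpolate_lt a hvinj

end Polynomial

theorem exists_add_mul_eq_of_ne {F : Type*} [Field F] {z₀ z₁ : F} (h : z₀ ≠ z₁) (c₀ c₁ : F) :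
    ∃ a b : F, a + b * z₀ = c₀ ∧ a + b * z₁ = c₁ := by
  have hd : z₀ - z₁ ≠ 0 := sub_ne_zero.mpr h
  refine ⟨c₀ - (c₀ - c₁) / (z₀ - z₁) * z₀, (c₀ - c₁) / (z₀ - z₁), by ring, ?_⟩
  field_simp
  ring

theorem evalR2_interleave {P Q : ℂ[X]} {j n : ℕ} (hP : P.degree < n) (hQ : Q.degree < n)
    (hn : n ≤ j / 2 + 1) (z : ℂ) :
    evalR2 j (interleave P Q) z = P.eval ((‖z‖ : ℂ) ^ 2) + Q.eval ((‖z‖ : ℂ) ^ 2) * z := by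
  have hP' := natDegree_lt_of_degree_lt (hP.trans_le (by exact_mod_cast hn)) (j / 2).succ_pos
  have hQ' := natDegree_lt_of_degree_lt (hQ.trans_le (by exact_mod_cast hn)) (j / 2).succ_pos
  rw [evalR2, eval_eq_sum_range' hP', eval_eq_sum_range' hQ', Finset.sum_mul,
    ← Finset.sum_add_distrib]
  refine Finset.sum_congr rfl fun m _ => ?_
  simp only [interleave_two_mul, interleave_two_mul_add_one, pow_mul]
  ring

theorem interpolation_r2_general (k : ℕ) (r : Fin k → ℝ)
    (hanti : StrictAnti r)
    (pts : Fin k → Fin 2 → ℂ)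
    (hne : ∀ l, pts l 0 ≠ pts l 1)
    (habs : ∀ l i, ‖pts l i‖ = r l)
    (c : Fin k → Fin 2 → ℂ) :
    ∃ α : ℕ → ℂ, (∀ m, 2 * k - 1 < m → α m = 0) ∧
      ∀ l i, evalR2 (2 * k - 1) α (pts l i) = c l i := by
  choose A B hAB using fun l => exists_add_mul_eq_of_ne (hne l) (c l 0) (c l 1)
  have hr_nonneg : ∀ l, 0 ≤ r l := fun l => habs l 0 ▸ norm_nonneg _
  have hr : Function.Injective fun l => (r l : ℂ) ^ 2 := by
    intro a b hab
    refine hanti.injective ((pow_left_inj₀ (hr_nonneg a) (hr_nonneg b) two_ne_zero).1 ?_)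
    simp only at hab
    exact_mod_cast hab
  obtain ⟨P, hPdeg, hP⟩ := exists_degree_lt_eval_eq hr A
  obtain ⟨Q, hQdeg, hQ⟩ := exists_degree_lt_eval_eq hr B
  refine ⟨interleave P Q, fun m hm => interleave_eq_zero hPdeg hQdeg (by omega), fun l i => ?_⟩
  rw [evalR2_interleave (j := 2 * k - 1) hPdeg hQdeg (by omega), habs, hP, hQ]
  fin_cases i
  exacts [(hAB l).1, (hAB l).2]

/-- Interpolation with `P_{2k-1}(r2)`: given strictly decreasing positive moduli
`r 0 > r 1 > … > r (k-1) > 0` and, for each modulus, two distinct points of that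
modulus, arbitrary values can be interpolated by some `p ∈ P_{2k-1}(r2)`. -/
theorem interpolation_r2 (k : ℕ) (r : Fin k → ℝ) (hpos : ∀ l, 0 < r l)
    (hanti : StrictAnti r)
    (pts : Fin k → Fin 2 → ℂ)
    (hne : ∀ l, pts l 0 ≠ pts l 1)
    (habs : ∀ l i, ‖pts l i‖ = r l)
    (c : Fin k → Fin 2 → ℂ) :
    ∃ α : ℕ → ℂ, (∀ m, 2 * k - 1 < m → α m = 0) ∧
      ∀ l i, evalR2 (2 * k - 1) α (pts l i) = c l i :=
  interpolation_r2_general k r hanti pts hne habs c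
end
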